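/- Let N be a positive integer. For each prime p dividing N, let p^{n(p)} be the exact power of p dividing N, let f_p be the multiplicative order of the image of p in the group (ℤ/(N/p^{n(p)})ℤ)ˣ/±1, and let e_p = |(ℤ/(N/p^{n(p)})ℤ)ˣ/±1| / f_p. Then ∏_χ ∏_{p | N} (1 − p²·χ_f(p)) / (1 − p·χ_f(p)) = ∏_{p | N} (1 + p^{f_p})^{e_p} / (1 + p), where the outer product on the left ranges over all even non-principal Dirichlet characters χ modulo N and χ_f denotes the primitive character inducing χ. (This is the identity by which Yu's class number formula h₁^∞(N) = ∏_{p|N} p^{L(p)} ∏_{χ ≠ χ₀ even} (1/4)B_{2,χ_f}∏_{p|N}(1 − p²χ_f(p)) is rewritten as h₁^∞(N) = ∏_{p|N} p^{L(p)}(1+p^{f_p})^{e_p}/(1+p) · ∏_{χ ≠ χ₀ even} (1/4)B_{2,χ}.) -/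

import Mathlib

open scoped Classical

/-- The group `(ℤ/Mℤ)ˣ/±1`. -/
abbrev unitsModPM (M : ℕ) : Type :=
  (ZMod M)ˣ ⧸ Subgroup.zpowers (-1 : (ZMod M)ˣ)

/-- `fP M p` is the multiplicative order of the image of `p` in `(ℤ/Mℤ)ˣ/±1`
(junk value `0` if `p` is not coprime to `M`). -/
noncomputable def fP (M p : ℕ) : ℕ :=
  if h : Nat.Coprime p M then
    orderOf (QuotientGroup.mk (ZMod.unitOfCoprime p h) : unitsModPM M)
  else 0

/-- `eP M p = |(ℤ/Mℤ)ˣ/±1| / fP M p`. -/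
noncomputable def eP (M p : ℕ) : ℕ := Nat.card (unitsModPM M) / fP M p

/-!
Fix a prime `p ∣ N` and put `M = N / p ^ ν`. The value `χ_f(p)` vanishes unless `p` does not
divide the conductor of `χ`, i.e. unless `χ` is induced from a character `ψ` modulo `M`, and then
`χ_f(p) = ψ(p)`. So the `p`-factor of the left side is a product over the even non-principal
characters modulo `M`, i.e. over the non-trivial characters of `G = (ℤ/Mℤ)ˣ/±1`. For an element
`g` of order `f` of a finite abelian group `G`, the values `φ(g)` of the characters run over
the `f`-th roots of unity, each `|G|/f` times, so `∏_φ (1 - x φ(g)) = (1 - x^f)^(|G|/f)`. Taking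
`x = p²` and `x = p` and removing the trivial character gives
`(1 - p^(2f))^e / (1 - p²) · (1 - p) / (1 - p^f)^e = (1 + p^f)^e / (1 + p)`.
-/

open Finset

theorem MonoidHom.prod_comp_eq_prod_image_pow_card_ker {G H M : Type*} [Group G] [Fintype G]
    [Group H] [DecidableEq H] [CommMonoid M] (φ : G →* H) (F : H → M) :
    ∏ g, F (φ g) = (∏ h ∈ univ.image φ, F h) ^ Nat.card φ.ker := by
  have hfiber : ∀ h ∈ univ.image φ, #{g | φ g = h} = Nat.card φ.ker := by
    intro h hh
    rw [MonoidHom.card_fiber_eq_of_mem_range φ (by simpa using hh) ⟨1, map_one φ⟩,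
      Nat.card_eq_fintype_card, Fintype.card_subtype]
    simp [MonoidHom.mem_ker]
  rw [prod_comp, ← prod_pow]
  exact prod_congr rfl fun h hh => by rw [hfiber h hh]

section CharacterValues

variable {G R : Type*} [CommGroup G] [Finite G] [CommRing R] [IsDomain R]
  [HasEnoughRootsOfUnity R (Monoid.exponent G)]

theorem MonoidHom.range_eval_eq_rootsOfUnity (g : G) :
    (MonoidHom.eval g : (G →* Rˣ) →* Rˣ).range = rootsOfUnity (orderOf g) R := by
  have : NeZero (orderOf g) := ⟨(orderOf_pos g).ne'⟩
  have : Finite (MonoidHom.eval g : (G →* Rˣ) →* Rˣ).range :=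
    (Set.finite_range _).to_subtype
  have hle : (MonoidHom.eval g : (G →* Rˣ) →* Rˣ).range ≤ rootsOfUnity (orderOf g) R := by
    rintro _ ⟨φ, rfl⟩
    rw [mem_rootsOfUnity, MonoidHom.eval_apply_apply, ← map_pow, pow_orderOf_eq_one, map_one]
  refine Subgroup.eq_of_le_of_card_ge hle <|
    (card_rootsOfUnity R _).trans (Nat.le_of_dvd Nat.card_pos ?_)
  -- Every character kills `g ^ #range`, so by duality `g ^ #range = 1`.
  refine orderOf_dvd_of_pow_eq_one <|
    (CommGroup.forall_apply_eq_apply_iff G (M := R)).mp fun φ => ?_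
  have : (⟨φ g, φ, rfl⟩ : (MonoidHom.eval g : (G →* Rˣ) →* Rˣ).range) ^ Nat.card _ = 1 :=
    pow_card_eq_one'
  simpa [map_pow] using congrArg Subtype.val this

theorem CommGroup.prod_one_sub_mul_apply [Fintype (G →* Rˣ)] (g : G) (x : R) :
    ∏ φ : G →* Rˣ, (1 - x * (φ g : R)) = (1 - x ^ orderOf g) ^ (Nat.card G / orderOf g) := by
  set f := orderOf g
  have : NeZero f := ⟨(orderOf_pos g).ne'⟩
  have : HasEnoughRootsOfUnity R f := .of_dvd R (Monoid.order_dvd_exponent g)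
  set ev : (G →* Rˣ) →* Rˣ := MonoidHom.eval g
  have hrange : ev.range = rootsOfUnity f R := MonoidHom.range_eval_eq_rootsOfUnity g
  have hker : Nat.card ev.ker = Nat.card G / f := by
    rw [← CommGroup.card_monoidHom_of_hasEnoughRootsOfUnity G R, ← ev.ker.card_mul_index,
      Subgroup.index_ker, hrange, HasEnoughRootsOfUnity.natCard_rootsOfUnity,
      Nat.mul_div_cancel _ (NeZero.pos f)]
  obtain ⟨ζ, hζ⟩ := HasEnoughRootsOfUnity.exists_primitiveRoot R f
  have hvalues : ∏ u ∈ univ.image ev, (1 - x * (u : R)) = 1 - x ^ f := by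
    have hroots := hζ.pow_sub_pow_eq_prod_sub_mul 1 x (NeZero.pos f)
    rw [one_pow] at hroots
    rw [hroots]
    refine prod_nbij Units.val (fun u hu => ?_) (fun u _ v _ h => Units.ext h) (fun z hz => ?_)
      (fun _ _ => by rw [mul_comm])
    · obtain ⟨φ, -, rfl⟩ := mem_image.mp hu
      have hφ : ev φ ∈ rootsOfUnity f R := hrange ▸ ⟨φ, rfl⟩
      rw [Polynomial.mem_nthRootsFinset (NeZero.pos f), ← Units.val_pow_eq_pow_val,
        (mem_rootsOfUnity _ _).mp hφ, Units.val_one]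
    · have hzf : z ^ f = 1 := (Polynomial.mem_nthRootsFinset (NeZero.pos f) 1).mp hz
      obtain ⟨φ, hφ⟩ : Units.ofPowEqOne z f hzf (NeZero.ne f) ∈ ev.range :=
        hrange ▸ Units.pow_ofPowEqOne hzf (NeZero.ne f)
      exact ⟨_, mem_image.mpr ⟨φ, mem_univ _, hφ⟩, Units.val_ofPowEqOne _ _ hzf (NeZero.ne f)⟩
  rw [← hvalues, ← hker]
  exact ev.prod_comp_eq_prod_image_pow_card_ker fun u : Rˣ => 1 - x * (u : R)

end CharacterValues

namespace DirichletCharacter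

variable {R : Type*} [CommRing R] {n : ℕ}

lemma changeLevel_apply_neg_one {m : ℕ} (hm : n ∣ m) (ψ : DirichletCharacter R n) :
    changeLevel hm ψ (-1) = ψ (-1) := by
  simpa [ZMod.cast_neg hm, ZMod.cast_one hm] using changeLevel_eq_cast_of_dvd ψ hm (-1)

lemma even_changeLevel_iff {m : ℕ} (hm : n ∣ m) {ψ : DirichletCharacter R n} :
    (changeLevel hm ψ).Even ↔ ψ.Even := by
  rw [Even, Even, changeLevel_apply_neg_one]

lemma even_iff_zpowers_neg_one_le_ker {χ : DirichletCharacter R n} :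
    χ.Even ↔ Subgroup.zpowers (-1) ≤ χ.toUnitHom.ker := by
  rw [Subgroup.zpowers_le, MonoidHom.mem_ker, ← Units.val_inj, MulChar.coe_toUnitHom]
  simp [Even]

variable (R n) in
noncomputable def evenEquivUnitsModPM :
    {χ : DirichletCharacter R n // χ.Even} ≃ (unitsModPM n →* Rˣ) :=
  (MulChar.equivToUnitHom.subtypeEquiv (q := fun φ => Subgroup.zpowers (-1) ≤ φ.ker) fun _ => by
      rw [even_iff_zpowers_neg_one_le_ker, MulChar.toUnitHom_eq]).trans <|
    (Equiv.subtypeEquivRight fun _ => by rw [QuotientGroup.ker_mk']).trans <|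
      (QuotientGroup.mk' _).liftOfSurjective (QuotientGroup.mk'_surjective _)

lemma evenEquivUnitsModPM_symm_apply (φ : unitsModPM n →* Rˣ) (a : (ZMod n)ˣ) :
    ((evenEquivUnitsModPM R n).symm φ : DirichletCharacter R n) a = φ a :=
  MulChar.equivToUnitHom_symm_coe _ a

lemma prod_filter_even_eq_prod_unitsModPM {S : Type*} [CommMonoid S]
    [Fintype (DirichletCharacter R n)] [Fintype (unitsModPM n →* Rˣ)] (F : R → S)
    (a : (ZMod n)ˣ) :
    ∏ χ ∈ univ.filter (fun χ : DirichletCharacter R n => χ.Even), F (χ a) =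
      ∏ φ : unitsModPM n →* Rˣ, F (φ a) := by
  refine (prod_subtype _ (fun χ => mem_filter_univ χ) fun χ => F (χ a)).trans <|
    Fintype.prod_equiv (evenEquivUnitsModPM R n) _ _ fun χ => ?_
  rw [← evenEquivUnitsModPM_symm_apply, Equiv.symm_apply_apply]

variable (R n) in
noncomputable def evenNonprincipal [IsDomain R] : Finset (DirichletCharacter R n) :=
  univ.filter fun χ => χ.Even ∧ χ ≠ 1

@[simp]
lemma mem_evenNonprincipal [IsDomain R] {χ : DirichletCharacter R n} :
    χ ∈ evenNonprincipal R n ↔ χ.Even ∧ χ ≠ 1 :=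
  mem_filter_univ χ

lemma primitiveCharacter_changeLevel_apply_natCast [Nontrivial R] {m : ℕ} [NeZero m]
    (hm : n ∣ m) (ψ : DirichletCharacter R n) {a : ℕ} (ha : a.Coprime n) :
    (changeLevel hm ψ).primitiveCharacter a = ψ a := by
  have h := primitiveCharacter_changeLevel_apply hm ψ a
  rwa [primitiveCharacter_apply_of_isCoprime ψ (Nat.isCoprime_iff_coprime.mpr ha),
    Int.cast_natCast, Int.cast_natCast] at h

lemma exists_changeLevel_ordCompl_eq [Nontrivial R] [NeZero n] {p : ℕ} (hp : p.Prime)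
    {χ : DirichletCharacter R n} (hχ : χ.primitiveCharacter p ≠ 0) :
    ∃ ψ : DirichletCharacter R (n / p ^ n.factorization p),
      changeLevel (Nat.ordCompl_dvd n p) ψ = χ := by
  rw [← Int.cast_natCast, Ne, apply_eq_zero_iff, not_not, Nat.isCoprime_iff_coprime] at hχ
  have hdvd : χ.conductor ∣ n / p ^ n.factorization p :=
    Nat.dvd_ordCompl_of_dvd_not_dvd χ.conductor_dvd_level (hp.coprime_iff_not_dvd.mp hχ)
  exact ⟨changeLevel hdvd χ.primitiveCharacter, by
    rw [← changeLevel_trans, changeLevel_primitiveCharacter]⟩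

theorem prod_evenNonprincipal_primitiveCharacter_eq_prod_ordCompl [IsDomain R] {S : Type*}
    [CommMonoid S] [NeZero n] {p : ℕ} (hp : p.Prime) (F : R → S) (hF : F 0 = 1) :
    ∏ χ ∈ evenNonprincipal R n, F (χ.primitiveCharacter (p : ZMod χ.conductor)) =
      ∏ ψ ∈ evenNonprincipal R (n / p ^ n.factorization p), F (ψ p) := by
  set m := n / p ^ n.factorization p
  have hmn : m ∣ n := Nat.ordCompl_dvd n p
  let lift : DirichletCharacter R m ↪ DirichletCharacter R n :=
    ⟨changeLevel hmn, changeLevel_injective hmn⟩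
  have hlift_mem {ψ : DirichletCharacter R m} :
      lift ψ ∈ evenNonprincipal R n ↔ ψ ∈ evenNonprincipal R m := by
    simp only [mem_evenNonprincipal]
    exact and_congr (even_changeLevel_iff hmn) (changeLevel_eq_one_iff hmn).not
  have hsub : (evenNonprincipal R m).map lift ⊆ evenNonprincipal R n := by
    intro χ hχ
    obtain ⟨ψ, hψ, rfl⟩ := mem_map.mp hχ
    exact hlift_mem.mpr hψ
  have hone : ∀ χ ∈ evenNonprincipal R n, χ ∉ (evenNonprincipal R m).map lift →
        F (χ.primitiveCharacter (p : ZMod χ.conductor)) = 1 := by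
    intro χ hχ hχm
    by_cases hzero : χ.primitiveCharacter p = 0
    · rw [hzero, hF]
    obtain ⟨ψ, rfl⟩ := exists_changeLevel_ordCompl_eq hp hzero
    exact absurd (mem_map_of_mem lift (hlift_mem.mp hχ)) hχm
  rw [← prod_subset hsub hone, prod_map]
  refine prod_congr rfl fun ψ _ => ?_
  exact congrArg F (primitiveCharacter_changeLevel_apply_natCast hmn ψ
    (Nat.coprime_ordCompl hp (NeZero.ne n)))

end DirichletCharacter

lemma fP_of_coprime {M p : ℕ} (h : p.Coprime M) :
    fP M p = orderOf (QuotientGroup.mk (ZMod.unitOfCoprime p h) : unitsModPM M) :=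
  dif_pos h

lemma fP_pos {M p : ℕ} [NeZero M] (h : p.Coprime M) : 0 < fP M p := by
  rw [fP_of_coprime h]
  exact orderOf_pos (G := unitsModPM M) _

namespace DirichletCharacter

variable {R : Type*} [CommRing R] [IsDomain R] {n : ℕ} [NeZero n]
  [HasEnoughRootsOfUnity R (Monoid.exponent (unitsModPM n))]

theorem one_sub_mul_prod_evenNonprincipal {p : ℕ} (hp : p.Coprime n) (x : R) :
    (1 - x) * ∏ ψ ∈ evenNonprincipal R n, (1 - x * ψ p) = (1 - x ^ fP n p) ^ eP n p := by
  let : Fintype (unitsModPM n →* Rˣ) := Fintype.ofFinite _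
  have hunit : IsUnit (p : ZMod n) := (ZMod.unitOfCoprime p hp).isUnit
  have hone : (1 : DirichletCharacter R n) ∈
      univ.filter fun ψ : DirichletCharacter R n => ψ.Even := by
    rw [mem_filter_univ, Even, MulChar.one_apply isUnit_one.neg]
  have hfilter : evenNonprincipal R n =
      (univ.filter fun ψ : DirichletCharacter R n => ψ.Even).erase 1 := by
    ext ψ
    simp [and_comm]
  have herase := mul_prod_erase _ (fun ψ : DirichletCharacter R n => 1 - x * ψ p) hone
  rw [MulChar.one_apply hunit, mul_one] at herase
  rw [hfilter, herase, ← ZMod.coe_unitOfCoprime p hp,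
    prod_filter_even_eq_prod_unitsModPM (fun z => 1 - x * z), eP, fP_of_coprime hp]
  exact CommGroup.prod_one_sub_mul_apply (G := unitsModPM n) _ x

theorem prod_evenNonprincipal_div_eq {K : Type*} [Field K] [CharZero K]
    [HasEnoughRootsOfUnity K (Monoid.exponent (unitsModPM n))] {p : ℕ} (hp1 : 1 < p)
    (hp : p.Coprime n) :
    ∏ ψ ∈ evenNonprincipal K n, (1 - (p : K) ^ 2 * ψ p) / (1 - (p : K) * ψ p) =
      (1 + (p : K) ^ fP n p) ^ eP n p / (1 + p) := by
  have hsub_ne {k : ℕ} (hk : k ≠ 0) : (1 : K) - (p : K) ^ k ≠ 0 := by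
    rw [sub_ne_zero, ne_comm]
    exact_mod_cast (Nat.one_lt_pow hk hp1).ne'
  have hadd_ne : (1 : K) + p ≠ 0 := by norm_cast; omega
  have hsub_ne_one : (1 : K) - p ≠ 0 := by simpa using hsub_ne one_ne_zero
  have hsq := one_sub_mul_prod_evenNonprincipal hp ((p : K) ^ 2)
  have hlin := one_sub_mul_prod_evenNonprincipal hp (p : K)
  set f := fP n p
  set e := eP n p
  set A := ∏ ψ ∈ evenNonprincipal K n, (1 - (p : K) ^ 2 * ψ p)
  set B := ∏ ψ ∈ evenNonprincipal K n, (1 - (p : K) * ψ p)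
  have hB : B ≠ 0 :=
    right_ne_zero_of_mul (hlin ▸ pow_ne_zero e (hsub_ne (fP_pos hp).ne'))
  rw [prod_div_distrib, div_eq_div_iff hB hadd_ne]
  refine mul_left_cancel₀ hsub_ne_one ?_
  calc (1 - (p : K)) * (A * (1 + p)) = (1 - (p : K) ^ 2) * A := by ring
    _ = ((1 - (p : K) ^ f) * (1 + (p : K) ^ f)) ^ e := by rw [hsq]; ring
    _ = (1 + (p : K) ^ f) ^ e * ((1 - p) * B) := by rw [hlin, mul_pow]; ring
    _ = (1 - p) * ((1 + (p : K) ^ f) ^ e * B) := by ring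

end DirichletCharacter

theorem yu_formula_rewriting_general (N : ℕ) [NeZero N] :
    ∏ χ ∈ Finset.univ.filter
        (fun χ : DirichletCharacter ℂ N => χ (-1) = 1 ∧ χ ≠ 1),
      ∏ p ∈ N.primeFactors,
        (1 - (p : ℂ) ^ 2 * χ.primitiveCharacter (p : ZMod χ.conductor)) /
          (1 - (p : ℂ) * χ.primitiveCharacter (p : ZMod χ.conductor)) =
      ∏ p ∈ N.primeFactors,
        (1 + (p : ℂ) ^ fP (N / p ^ (N.factorization p)) p) ^ eP (N / p ^ (N.factorization p)) p /
          (1 + (p : ℂ)) := by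
  have hS : univ.filter (fun χ : DirichletCharacter ℂ N => χ (-1) = 1 ∧ χ ≠ 1) =
      DirichletCharacter.evenNonprincipal ℂ N := by
    ext χ
    simp [DirichletCharacter.Even]
  rw [hS, prod_comm]
  refine prod_congr rfl fun p hpN => ?_
  have hp := Nat.prime_of_mem_primeFactors hpN
  have : NeZero (N / p ^ N.factorization p) := ⟨(Nat.ordCompl_pos p (NeZero.ne N)).ne'⟩
  have : NeZero (Monoid.exponent (unitsModPM (N / p ^ N.factorization p))) :=
    ⟨Monoid.exponent_ne_zero_of_finite (G := unitsModPM _)⟩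
  rw [DirichletCharacter.prod_evenNonprincipal_primitiveCharacter_eq_prod_ordCompl hp
    (fun z : ℂ => (1 - (p : ℂ) ^ 2 * z) / (1 - p * z)) (by simp)]
  exact DirichletCharacter.prod_evenNonprincipal_div_eq hp.one_lt
    (Nat.coprime_ordCompl hp (NeZero.ne N))

/-- **The identity rewriting Yu's class number formula.** For each prime `p | N` let
`p^{n(p)}` be the exact power of `p` in `N`, let `f_p` be the multiplicative order of the
image of `p` in `(ℤ/(N/p^{n(p)})ℤ)ˣ/±1`, and `e_p = |(ℤ/(N/p^{n(p)})ℤ)ˣ/±1| / f_p`. Then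
`∏_χ ∏_{p|N} (1 − p²χ_f(p))/(1 − pχ_f(p)) = ∏_{p|N} (1 + p^{f_p})^{e_p}/(1 + p)`, where
`χ` ranges over the even non-principal Dirichlet characters modulo `N` and `χ_f` is the
primitive character inducing `χ`. -/
theorem yu_formula_rewriting (N : ℕ) [NeZero N] (hN : 0 < N) :
    ∏ χ ∈ Finset.univ.filter
        (fun χ : DirichletCharacter ℂ N => χ (-1) = 1 ∧ χ ≠ 1),
      ∏ p ∈ N.primeFactors,
        (1 - (p : ℂ) ^ 2 * χ.primitiveCharacter (p : ZMod χ.conductor)) /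
          (1 - (p : ℂ) * χ.primitiveCharacter (p : ZMod χ.conductor)) =
      ∏ p ∈ N.primeFactors,
        (1 + (p : ℂ) ^ fP (N / p ^ (N.factorization p)) p) ^ eP (N / p ^ (N.factorization p)) p /
          (1 + (p : ℂ)) :=
  yu_formula_rewriting_general N
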